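/- Let m be an odd positive integer. There exists a surjective ring homomorphism τ from H₍₁,₂,₂₎ onto the ring M₂(ℤ/mℤ) of 2×2 matrices over ℤ/mℤ such that: (1) for g ∈ H₍₁,₂,₂₎, τ(g) = 0 if and only if g = m·h for some h ∈ H₍₁,₂,₂₎; and (2) for every g ∈ H₍₁,₂,₂₎ and every integer k with N(g) = k, det(τ(g)) equals the residue of k modulo m. In particular τ induces a ring isomorphism of H₍₁,₂,₂₎ modulo m with M₂(ℤ/mℤ) carrying the quaternion norm to the determinant. -/

import Mathlib

open Quaternion

noncomputable section

/-- `v₁ = 1` -/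
def v₁ : ℍ[ℝ] := 1

/-- `v₂ = i` -/
def v₂ : ℍ[ℝ] := ⟨0, 1, 0, 0⟩

/-- `v₃ = (1 + i + √2·j)/2` -/
def v₃ : ℍ[ℝ] := ⟨1/2, 1/2, Real.sqrt 2 / 2, 0⟩

/-- `v₄ = (1 + i + √2·k)/2` -/
def v₄ : ℍ[ℝ] := ⟨1/2, 1/2, 0, Real.sqrt 2 / 2⟩

/-- The quaternion order `H₍₁,₂,₂₎`: the ℤ-span of `{v₁, v₂, v₃, v₄}`. -/
def H122 : Set ℍ[ℝ] :=
  {q | ∃ a b c d : ℤ, q = a • v₁ + b • v₂ + c • v₃ + d • v₄}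

open Polynomial

/-!
With `J = √2 j` one has `i² = -1`, `J² = -2`, `iJ = -Ji`, and `H₍₁,₂,₂₎` has the ℤ-basis
`1, i, (1 + i + J)/2, (1 + i + iJ)/2` with integral structure constants. For odd `m`, Hensel's
lemma in `ℤ_[p]` and the Chinese remainder theorem give `x² + y² = -2` in `ℤ/mℤ`, and then
`i ↦ !![0, -1; 1, 0]`, `J ↦ !![x, y; y, -x]` splits the algebra. With `u = (1 + x)/2`,
`w = (1 + y)/2` the images of the basis have entries polynomial in `u, w`, so reducing the integer
coordinates modulo `m` is multiplicative. The resulting linear map `(ℤ/mℤ)⁴ → M₂(ℤ/mℤ)` is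
invertible because `2` is a unit, which yields surjectivity and the kernel `m·H₍₁,₂,₂₎`; the
determinant of the image is the reduced norm, i.e. the norm form in the coordinates.
-/

theorem ZMod.isUnit_two_of_odd {m : ℕ} (hm : Odd m) : IsUnit (2 : ZMod m) :=
  (ZMod.isUnit_prime_iff_not_dvd Nat.prime_two).mpr hm.not_two_dvd_nat

theorem PadicInt.exists_sq_add_sq_eq {p : ℕ} [Fact p.Prime] (hp : p ≠ 2) {z : ℤ_[p]}
    (hz : IsUnit z) : ∃ x y : ℤ_[p], x ^ 2 + y ^ 2 = z := by
  obtain ⟨a, b, hab⟩ := ZMod.sq_add_sq p (toZMod z)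
  wlog ha : a ≠ 0 generalizing a b
  · refine this b a (by rw [← hab]; ring) fun hb => ?_
    rw [not_not.mp ha, hb] at hab
    exact (hz.map toZMod).ne_zero (by simpa using hab.symm)
  have h2 : (2 : ZMod p) ≠ 0 :=
    (ZMod.isUnit_two_of_odd ((Fact.out : p.Prime).odd_of_ne_two hp)).ne_zero
  set y : ℤ_[p] := (b.val : ℤ_[p])
  have hroot : (X ^ 2 + C (y ^ 2 - z)).eval (a.val : ℤ_[p]) ∈ IsLocalRing.maximalIdeal ℤ_[p] := by
    rw [← ker_toZMod, RingHom.mem_ker]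
    simp only [ZMod.natCast_val, map_sub, map_pow, eval_add, eval_pow, eval_X, eval_sub, eval_C,
      map_add, ZMod.ringHom_map_cast, y]
    linear_combination hab
  have hsimple : IsUnit (Ideal.Quotient.mk (IsLocalRing.maximalIdeal ℤ_[p])
      ((X ^ 2 + C (y ^ 2 - z)).derivative.eval (a.val : ℤ_[p]))) := by
    apply IsUnit.map
    rw [derivative_add, derivative_C, derivative_X_pow, add_zero,
      ← IsLocalRing.notMem_maximalIdeal, ← ker_toZMod, RingHom.mem_ker]
    simp [map_ofNat, h2, ha]
  obtain ⟨x, hx, -⟩ :=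
    HenselianRing.is_henselian _ (monic_X_pow_add_C _ two_ne_zero) _ hroot hsimple
  refine ⟨x, y, ?_⟩
  simp only [IsRoot, eval_add, eval_pow, eval_X, eval_C] at hx
  linear_combination hx

theorem ZMod.exists_sq_add_sq_eq {m : ℕ} (hm : Odd m) {z : ℤ} (hz : IsUnit (z : ZMod m)) :
    ∃ x y : ZMod m, x ^ 2 + y ^ 2 = z := by
  induction m using Nat.recOnPosPrimePosCoprime with
  | prime_pow p n hp hn =>
    have : Fact p.Prime := ⟨hp⟩
    have hp2 : p ≠ 2 := by
      rintro rfl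
      exact Nat.not_even_iff_odd.mpr hm ((Nat.even_pow' hn.ne').mpr even_two)
    have hzp : IsUnit (z : ℤ_[p]) := by
      have : IsUnit (z : ZMod p) := by
        simpa using hz.map (ZMod.castHom (dvd_pow_self p hn.ne') (ZMod p))
      rw [← IsLocalRing.notMem_maximalIdeal, ← PadicInt.ker_toZMod, RingHom.mem_ker, map_intCast]
      exact this.ne_zero
    obtain ⟨x, y, hxy⟩ := PadicInt.exists_sq_add_sq_eq hp2 hzp
    refine ⟨PadicInt.toZModPow n x, PadicInt.toZModPow n y, ?_⟩
    simpa using congrArg (PadicInt.toZModPow n) hxy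
  | zero => exact absurd hm (by simp)
  | one => exact ⟨0, 0, Subsingleton.elim _ _⟩
  | coprime a b _ _ hab iha ihb =>
    obtain ⟨x₁, y₁, h₁⟩ := iha (Nat.odd_mul.mp hm).1
      (by simpa using hz.map (ZMod.castHom (dvd_mul_right a b) (ZMod a)))
    obtain ⟨x₂, y₂, h₂⟩ := ihb (Nat.odd_mul.mp hm).2
      (by simpa using hz.map (ZMod.castHom (dvd_mul_left b a) (ZMod b)))
    let e := ZMod.chineseRemainder hab
    refine ⟨e.symm (x₁, x₂), e.symm (y₁, y₂), e.injective ?_⟩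
    simp [h₁, h₂, Prod.ext_iff]

theorem exists_sq_sub_add_sq_sub_add_one_eq_zero {R : Type*} [CommRing R] {x y : R}
    (hxy : x ^ 2 + y ^ 2 = -2) (h2 : IsUnit (2 : R)) :
    ∃ u w : R, u ^ 2 - u + w ^ 2 - w + 1 = 0 := by
  obtain ⟨t, ht⟩ := h2.exists_right_inv
  exact ⟨t * (1 + x), t * (1 + y), by linear_combination t ^ 2 * hxy + (t * (x + y) - 1) * ht⟩

namespace H122

section MatrixModel

variable {R : Type*} [CommRing R]

def normForm (a b c d : R) : R :=
  a ^ 2 + b ^ 2 + c ^ 2 + d ^ 2 + (a + b) * (c + d) + c * d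

/-- `a + b I + c V₃ + d V₄` with `I = !![0, -1; 1, 0]`, `V₃ = !![u, w - 1; w, 1 - u]`,
`V₄ = !![1 - w, u - 1; u, w]`: the images of `1, i, v₃, v₄` under `i ↦ I`,
`√2 j ↦ !![2u - 1, 2w - 1; 2w - 1, 1 - 2u]`. The relation `u² - u + w² - w + 1 = 0` assumed
below is `(2u - 1)² + (2w - 1)² = -2` divided by `4`. -/
def toMatrix (u w a b c d : R) : Matrix (Fin 2) (Fin 2) R :=
  !![a + c * u + d * (1 - w), -b + c * (w - 1) + d * (u - 1);
     b + c * w + d * u, a + c * (1 - u) + d * w]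

theorem toMatrix_add (u w a b c d a' b' c' d' : R) :
    toMatrix u w a b c d + toMatrix u w a' b' c' d' =
      toMatrix u w (a + a') (b + b') (c + c') (d + d') := by
  ext i j; fin_cases i <;> fin_cases j <;> simp [toMatrix] <;> ring

theorem toMatrix_one (u w : R) : toMatrix u w 1 0 0 0 = 1 := by
  ext i j; fin_cases i <;> fin_cases j <;> simp [toMatrix]

variable {u w : R} (h : u ^ 2 - u + w ^ 2 - w + 1 = 0)
include h

theorem toMatrix_mul (a b c d a' b' c' d' : R) :
    toMatrix u w a b c d * toMatrix u w a' b' c' d' =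
      toMatrix u w (a * a' - b * b' - b * c' - c * c' - d * b' - d * c' - d * d')
        (a * b' + b * a' + b * d' + c * b' + c * d' - d * c')
        (a * c' + c * a' + c * c' - b * d' + d * b' + d * c')
        (a * d' + b * c' - c * b' + d * a' + d * c' + d * d') := by
  rw [toMatrix, toMatrix, toMatrix, Matrix.mul_fin_two]
  ext i j; fin_cases i <;> fin_cases j <;> simp
  · linear_combination (c * c' + d * d') * h
  · linear_combination (c * d' - d * c') * h
  · linear_combination (d * c' - c * d') * h
  · linear_combination (c * c' + d * d') * h

theorem det_toMatrix (a b c d : R) : (toMatrix u w a b c d).det = normForm a b c d := by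
  rw [toMatrix, Matrix.det_fin_two_of, normForm]
  linear_combination (-c ^ 2 - d ^ 2) * h

theorem toMatrix_eq_zero_iff (h2 : IsUnit (2 : R)) {a b c d : R} :
    toMatrix u w a b c d = 0 ↔ a = 0 ∧ b = 0 ∧ c = 0 ∧ d = 0 := by
  refine ⟨fun h0 => ?_, by rintro ⟨rfl, rfl, rfl, rfl⟩; simp [toMatrix, Matrix.eta_fin_two 0]⟩
  obtain ⟨⟨h00, h01⟩, h10, h11⟩ : (_ ∧ _) ∧ _ ∧ _ := by
    simpa [toMatrix, ← Matrix.ext_iff, Fin.forall_fin_two] using h0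
  have hc : c = 0 := h2.mul_right_eq_zero.mp <| by
    linear_combination -(2 * u - 1) * (h00 - h11) - (2 * w - 1) * (h10 + h01) + 4 * c * h
  have hd : d = 0 := h2.mul_right_eq_zero.mp <| by
    linear_combination (2 * w - 1) * (h00 - h11) - (2 * u - 1) * (h10 + h01) + 4 * d * h
  subst hc hd
  exact ⟨h2.mul_right_eq_zero.mp (by linear_combination h00 + h11),
    h2.mul_right_eq_zero.mp (by linear_combination h10 - h01), rfl, rfl⟩

theorem exists_toMatrix_eq (h2 : IsUnit (2 : R)) (M : Matrix (Fin 2) (Fin 2) R) :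
    ∃ a b c d : R, toMatrix u w a b c d = M := by
  obtain ⟨s, hs⟩ := (h2.pow 2).exists_left_inv
  -- Cramer's rule: if `M = toMatrix u w a b c d` then `γ = 2c`, `δ = 2d`, and the first two
  -- witnesses below are `4a` and `4b` before scaling by `s = 4⁻¹`.
  set γ := -((2 * u - 1) * (M 0 0 - M 1 1) + (2 * w - 1) * (M 0 1 + M 1 0))
  set δ := (2 * w - 1) * (M 0 0 - M 1 1) - (2 * u - 1) * (M 0 1 + M 1 0)
  refine ⟨s * (2 * (M 0 0 + M 1 1) - γ - δ), s * (2 * (M 1 0 - M 0 1) - γ - δ), s * (2 * γ),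
    s * (2 * δ), ?_⟩
  ext i j; fin_cases i <;> fin_cases j <;> simp [toMatrix]
  · linear_combination s * (4 * M 1 1 - 4 * M 0 0) * h + M 0 0 * hs
  · linear_combination -s * (4 * M 0 1 + 4 * M 1 0) * h + M 0 1 * hs
  · linear_combination -s * (4 * M 0 1 + 4 * M 1 0) * h + M 1 0 * hs
  · linear_combination s * (4 * M 0 0 - 4 * M 1 1) * h + M 1 1 * hs

end MatrixModel

def ofCoords (a b c d : ℤ) : ℍ[ℝ] := a • v₁ + b • v₂ + c • v₃ + d • v₄

theorem mem_iff {q : ℍ[ℝ]} : q ∈ H122 ↔ ∃ a b c d : ℤ, q = ofCoords a b c d := Iff.rfl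

theorem ofCoords_mem (a b c d : ℤ) : ofCoords a b c d ∈ H122 := ⟨a, b, c, d, rfl⟩

@[simp] theorem re_ofCoords (a b c d : ℤ) : (ofCoords a b c d).re = a + c / 2 + d / 2 := by
  simp [ofCoords]; simp [v₁, v₂, v₃, v₄]; ring

@[simp] theorem imI_ofCoords (a b c d : ℤ) : (ofCoords a b c d).imI = b + c / 2 + d / 2 := by
  simp [ofCoords]; simp [v₁, v₂, v₃, v₄]; ring

@[simp] theorem imJ_ofCoords (a b c d : ℤ) : (ofCoords a b c d).imJ = c * √2 / 2 := by
  simp [ofCoords]; simp [v₁, v₂, v₃, v₄]; ring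

@[simp] theorem imK_ofCoords (a b c d : ℤ) : (ofCoords a b c d).imK = d * √2 / 2 := by
  simp [ofCoords]; simp [v₁, v₂, v₃, v₄]; ring

theorem ofCoords_add (a b c d a' b' c' d' : ℤ) :
    ofCoords a b c d + ofCoords a' b' c' d' = ofCoords (a + a') (b + b') (c + c') (d + d') := by
  simp only [ofCoords, add_smul]; abel

theorem ofCoords_one : ofCoords 1 0 0 0 = 1 := by
  simp [ofCoords, v₁]

theorem ofCoords_mul (a b c d a' b' c' d' : ℤ) :
    ofCoords a b c d * ofCoords a' b' c' d' =
      ofCoords (a * a' - b * b' - b * c' - c * c' - d * b' - d * c' - d * d')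
        (a * b' + b * a' + b * d' + c * b' + c * d' - d * c')
        (a * c' + c * a' + c * c' - b * d' + d * b' + d * c')
        (a * d' + b * c' - c * b' + d * a' + d * c' + d * d') := by
  have h := Real.sq_sqrt (zero_le_two (α := ℝ))
  ext <;> simp <;> ring_nf <;> rw [h] <;> ring

theorem ofCoords_mul_star (a b c d : ℤ) :
    ofCoords a b c d * star (ofCoords a b c d) = ((normForm a b c d : ℤ) : ℍ[ℝ]) := by
  have h := Real.sq_sqrt (zero_le_two (α := ℝ))
  ext <;> simp
  · simp only [normForm]; push_cast; ring_nf; rw [h]; ring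
  all_goals ring

theorem natCast_mul_ofCoords (m : ℕ) (a b c d : ℤ) :
    (m : ℍ[ℝ]) * ofCoords a b c d = ofCoords (m * a) (m * b) (m * c) (m * d) := by
  ext <;> simp <;> ring

/-- On `H₍₁,₂,₂₎` the arguments of `round` are the integer coordinates themselves. -/
def coords (q : ℍ[ℝ]) : ℤ × ℤ × ℤ × ℤ :=
  (round (q.re - (q.imJ + q.imK) / √2), round (q.imI - (q.imJ + q.imK) / √2),
    round (√2 * q.imJ), round (√2 * q.imK))

theorem coords_ofCoords (a b c d : ℤ) : coords (ofCoords a b c d) = (a, b, c, d) := by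
  have h := Real.sq_sqrt (zero_le_two (α := ℝ))
  have h0 : √2 ≠ 0 := by positivity
  simp only [coords, re_ofCoords, imI_ofCoords, imJ_ofCoords, imK_ofCoords]
  field_simp
  simp [h]

def reprMod {m : ℕ} (u w : ZMod m) (q : ℍ[ℝ]) : Matrix (Fin 2) (Fin 2) (ZMod m) :=
  match coords q with
  | (a, b, c, d) => toMatrix u w a b c d

variable {m : ℕ} {u w : ZMod m}

theorem reprMod_ofCoords (a b c d : ℤ) :
    reprMod u w (ofCoords a b c d) = toMatrix u w a b c d := by
  simp [reprMod, coords_ofCoords]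

theorem reprMod_add {g g' : ℍ[ℝ]} (hg : g ∈ H122) (hg' : g' ∈ H122) :
    reprMod u w (g + g') = reprMod u w g + reprMod u w g' := by
  obtain ⟨a, b, c, d, rfl⟩ := mem_iff.mp hg
  obtain ⟨a', b', c', d', rfl⟩ := mem_iff.mp hg'
  rw [ofCoords_add, reprMod_ofCoords, reprMod_ofCoords, reprMod_ofCoords, toMatrix_add]
  simp

theorem reprMod_one : reprMod u w 1 = 1 := by
  simpa [← ofCoords_one, reprMod_ofCoords] using toMatrix_one u w

variable (h : u ^ 2 - u + w ^ 2 - w + 1 = 0)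
include h

theorem reprMod_mul {g g' : ℍ[ℝ]} (hg : g ∈ H122) (hg' : g' ∈ H122) :
    reprMod u w (g * g') = reprMod u w g * reprMod u w g' := by
  obtain ⟨a, b, c, d, rfl⟩ := mem_iff.mp hg
  obtain ⟨a', b', c', d', rfl⟩ := mem_iff.mp hg'
  rw [ofCoords_mul, reprMod_ofCoords, reprMod_ofCoords, reprMod_ofCoords, toMatrix_mul h]
  simp

theorem det_reprMod {g : ℍ[ℝ]} (hg : g ∈ H122) {k : ℤ} (hk : g * star g = k) :
    (reprMod u w g).det = k := by
  obtain ⟨a, b, c, d, rfl⟩ := mem_iff.mp hg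
  rw [ofCoords_mul_star] at hk
  have hN : normForm a b c d = k := by simpa using congrArg QuaternionAlgebra.re hk
  rw [reprMod_ofCoords, det_toMatrix h, ← hN]
  simp [normForm]

theorem exists_reprMod_eq (h2 : IsUnit (2 : ZMod m)) (M : Matrix (Fin 2) (Fin 2) (ZMod m)) :
    ∃ g ∈ H122, reprMod u w g = M := by
  obtain ⟨a, b, c, d, rfl⟩ := exists_toMatrix_eq h h2 M
  obtain ⟨a, rfl⟩ := ZMod.intCast_surjective a
  obtain ⟨b, rfl⟩ := ZMod.intCast_surjective b
  obtain ⟨c, rfl⟩ := ZMod.intCast_surjective c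
  obtain ⟨d, rfl⟩ := ZMod.intCast_surjective d
  exact ⟨ofCoords a b c d, ofCoords_mem a b c d, reprMod_ofCoords a b c d⟩

theorem reprMod_eq_zero_iff (h2 : IsUnit (2 : ZMod m)) {g : ℍ[ℝ]} (hg : g ∈ H122) :
    reprMod u w g = 0 ↔ ∃ g' ∈ H122, g = (m : ℍ[ℝ]) * g' := by
  constructor
  · obtain ⟨a, b, c, d, rfl⟩ := mem_iff.mp hg
    rw [reprMod_ofCoords, toMatrix_eq_zero_iff h h2]
    simp only [ZMod.intCast_zmod_eq_zero_iff_dvd]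
    rintro ⟨⟨a, rfl⟩, ⟨b, rfl⟩, ⟨c, rfl⟩, ⟨d, rfl⟩⟩
    exact ⟨ofCoords a b c d, ofCoords_mem a b c d, (natCast_mul_ofCoords m a b c d).symm⟩
  · rintro ⟨g', hg', rfl⟩
    obtain ⟨a, b, c, d, rfl⟩ := mem_iff.mp hg'
    rw [natCast_mul_ofCoords, reprMod_ofCoords, toMatrix_eq_zero_iff h h2]
    simp

end H122

theorem hurwitz_correspondence_general (m : ℕ) (hm : Odd m) :
    ∃ τ : ℍ[ℝ] → Matrix (Fin 2) (Fin 2) (ZMod m),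
      (∀ g ∈ H122, ∀ g' ∈ H122, τ (g + g') = τ g + τ g') ∧
      (∀ g ∈ H122, ∀ g' ∈ H122, τ (g * g') = τ g * τ g') ∧
      τ 1 = 1 ∧
      (∀ M : Matrix (Fin 2) (Fin 2) (ZMod m), ∃ g ∈ H122, τ g = M) ∧
      (∀ g ∈ H122, (τ g = 0 ↔ ∃ h ∈ H122, g = (m : ℍ[ℝ]) * h)) ∧
      (∀ g ∈ H122, ∀ k : ℤ, g * star g = (k : ℍ[ℝ]) → (τ g).det = (k : ZMod m)) := by
  have h2 := ZMod.isUnit_two_of_odd hm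
  obtain ⟨x, y, hxy⟩ := ZMod.exists_sq_add_sq_eq hm (z := -2) (by simpa using h2.neg)
  obtain ⟨u, w, h⟩ :=
    exists_sq_sub_add_sq_sub_add_one_eq_zero (by simpa using hxy) h2
  exact ⟨H122.reprMod u w, fun _ hg _ hg' => H122.reprMod_add hg hg',
    fun _ hg _ hg' => H122.reprMod_mul h hg hg', H122.reprMod_one, H122.exists_reprMod_eq h h2,
    fun _ hg => H122.reprMod_eq_zero_iff h h2 hg, fun _ hg _ hk => H122.det_reprMod h hg hk⟩

/-- Hurwitz Correspondence Theorem for `H₍₁,₂,₂₎`: for odd positive `m` there is a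
map `τ` on `H₍₁,₂,₂₎`, additive and multiplicative on `H₍₁,₂,₂₎`, sending `1` to the
identity matrix, surjective onto `M₂(ℤ/mℤ)`, whose kernel on `H₍₁,₂,₂₎` is exactly
`m·H₍₁,₂,₂₎`, and which carries the quaternion norm to the determinant modulo `m`.
In particular `τ` induces a ring isomorphism of `H₍₁,₂,₂₎` modulo `m` with
`M₂(ℤ/mℤ)` carrying the norm to the determinant. -/
theorem hurwitz_correspondence (m : ℕ) (hm : Odd m) (hpos : 0 < m) :
    ∃ τ : ℍ[ℝ] → Matrix (Fin 2) (Fin 2) (ZMod m),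
      (∀ g ∈ H122, ∀ g' ∈ H122, τ (g + g') = τ g + τ g') ∧
      (∀ g ∈ H122, ∀ g' ∈ H122, τ (g * g') = τ g * τ g') ∧
      τ 1 = 1 ∧
      (∀ M : Matrix (Fin 2) (Fin 2) (ZMod m), ∃ g ∈ H122, τ g = M) ∧
      (∀ g ∈ H122, (τ g = 0 ↔ ∃ h ∈ H122, g = (m : ℍ[ℝ]) * h)) ∧
      (∀ g ∈ H122, ∀ k : ℤ, g * star g = (k : ℍ[ℝ]) → (τ g).det = (k : ZMod m)) :=
  hurwitz_correspondence_general m hm
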